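/- Let (x_i) be a normalized 1-unconditional sequence in a real Banach space X. Then there exist constants c₁, c₂ > 0 with c₁·c₂ ≤ 2 such that for every finitely supported λ : ℕ → ℝ: J*(λ) ≤ c₁ · sup{ J((λ_i·a_i)_{i≥1}) : a : ℕ → ℝ finitely supported with J(a) ≤ 1 } and sup{ J((λ_i·a_i)_{i≥1}) : a finitely supported with J(a) ≤ 1 } ≤ c₂ · J*(λ). (This expresses that the operator norm of the diagonal multiplier with entries λ on the jamesification J(X) is equivalent, with product of constants at most 2, to the dual jamesification norm of λ.) -/

import Mathlib

open scoped BigOperators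


variable {X : Type*} [NormedAddCommGroup X] [NormedSpace ℝ X]

/-- A sequence is 1-unconditional if changing signs of coefficients does not change the
norm of finite linear combinations. -/
def OneUnconditional (x : ℕ → X) : Prop :=
  ∀ (s : Finset ℕ) (a ε : ℕ → ℝ), (∀ i, ε i = 1 ∨ ε i = -1) →
    ‖∑ i ∈ s, (ε i * a i) • x i‖ = ‖∑ i ∈ s, a i • x i‖

/-- The quantities whose supremum defines the jamesification norm `J(a)`:
`‖∑_{n<r} (∑_{i ∈ [k n, m n]} a i) • x (k n)‖` over all systems
`k 0 ≤ m 0 < k 1 ≤ m 1 < ⋯`. -/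
def jamesSet (x : ℕ → X) (a : ℕ → ℝ) : Set ℝ :=
  {v | ∃ (r : ℕ) (k m : ℕ → ℕ), (∀ n, k n ≤ m n) ∧ (∀ n, m n < k (n + 1)) ∧
    v = ‖∑ n ∈ Finset.range r, (∑ i ∈ Finset.Icc (k n) (m n), a i) • x (k n)‖}

/-- The jamesification norm of a finitely supported sequence of coefficients. -/
noncomputable def jamesNorm (x : ℕ → X) (a : ℕ → ℝ) : ℝ :=
  sSup (jamesSet x a)

/-- The dual jamesification norm:
`J*(λ) = sup { |∑ i, λ i * a i| : a finitely supported, J(a) ≤ 1 }`. -/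
noncomputable def jamesDualNorm (x : ℕ → X) (l : ℕ → ℝ) : ℝ :=
  sSup {v | ∃ a : ℕ → ℝ, (Function.support a).Finite ∧ jamesNorm x a ≤ 1 ∧
    v = |∑ᶠ i, l i * a i|}

/-- The quantities whose supremum defines the variation norm `V(a)`:
`‖∑_{n<r} (a (k n) - a (m n)) • x (k n)‖` over all systems
`k 0 < m 0 ≤ k 1 < m 1 ≤ ⋯`. -/
def varSet (x : ℕ → X) (a : ℕ → ℝ) : Set ℝ :=
  {v | ∃ (r : ℕ) (k m : ℕ → ℕ), (∀ n, k n < m n) ∧ (∀ n, m n ≤ k (n + 1)) ∧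
    v = ‖∑ n ∈ Finset.range r, (a (k n) - a (m n)) • x (k n)‖}

/-- The variation norm of a finitely supported sequence of coefficients. -/
noncomputable def varNorm (x : ℕ → X) (a : ℕ → ℝ) : ℝ :=
  sSup (varSet x a)

/-- The quantities whose supremum is the operator norm of the diagonal multiplier with
entries `l` acting on the jamesification: `J(l·a)` over finitely supported `a` in the unit
ball of the jamesification norm. -/
def multiplierSet (x : ℕ → X) (l : ℕ → ℝ) : Set ℝ :=
  {v | ∃ a : ℕ → ℝ, (Function.support a).Finite ∧ jamesNorm x a ≤ 1 ∧
    v = jamesNorm x (fun i => l i * a i)}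

/-!
Take `c₁ = 1`, `c₂ = 2`. The lower bound holds because `|∑ λᵢ aᵢ|` is the one-block term in
the supremum defining `J(λa)`.

For the upper bound fix intervals `Iₙ = [kₙ, mₙ]` and norm
`V = ∑ₙ (∑_{i ∈ Iₙ} λᵢ aᵢ) x_{kₙ}` by a functional `f` of norm `≤ 1`. Then `‖V‖ = ∑ λᵢ bᵢ`,
where `b` is `a` multiplied by `f(x_{kₙ})` on `Iₙ`, so `‖V‖ ≤ J*(λ) J(b)`, and it remains to
show `J(b) ≤ 2 J(a)`. A test interval `[p, q]` meets the `Iₙ` in at most one *head* piece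
starting at `p` and in *tail* pieces starting at the points `kₙ ∈ (p, q]`. The head pieces of
all test intervals form a system of successive intervals for `a`, weighted by scalars of
modulus `≤ 1`, so by 1-unconditionality they contribute at most `J(a)`. Each `Iₙ` has at most
one tail piece, the one starting at `kₙ`; estimating the tail pieces in `ℓ¹` and then using
`∑ |cₙ| |f(x_{kₙ})| ≤ ‖∑ cₙ x_{kₙ}‖` (choose signs and apply 1-unconditionality) bounds
their contribution by `J(a)` as well.
-/

open Finset Function

namespace OneUnconditional

variable {x : ℕ → X}

theorem comp_injective (hu : OneUnconditional x) {k : ℕ → ℕ} (hk : Injective k) :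
    OneUnconditional (x ∘ k) := by
  intro s a ε hε
  have reindex : ∀ c : ℕ → ℝ,
      ∑ i ∈ s, c i • (x ∘ k) i = ∑ j ∈ s.image k, c (invFun k j) • x j := fun c => by
    rw [sum_image hk.injOn]
    simp only [comp_apply, leftInverse_invFun hk _]
  rw [reindex, reindex]
  exact hu _ (a ∘ invFun k) (ε ∘ invFun k) fun j => hε _

theorem sum_abs_mul_abs_le_norm (hu : OneUnconditional x) {f : X →L[ℝ] ℝ} (hf : ‖f‖ ≤ 1)
    (s : Finset ℕ) (a : ℕ → ℝ) : ∑ i ∈ s, |a i| * |f (x i)| ≤ ‖∑ i ∈ s, a i • x i‖ := by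
  let ε : ℕ → ℝ := fun i => if 0 ≤ a i * f (x i) then 1 else -1
  have hε : ∀ i, ε i = 1 ∨ ε i = -1 := fun i => by unfold ε; split_ifs <;> simp
  have hsign : ∀ i, |a i| * |f (x i)| = f ((ε i * a i) • x i) := fun i => by
    rw [map_smul, smul_eq_mul, ← abs_mul]
    unfold ε
    split_ifs with h
    · rw [abs_of_nonneg h]; ring
    · rw [abs_of_neg (not_le.mp h)]; ring
  calc ∑ i ∈ s, |a i| * |f (x i)| = f (∑ i ∈ s, (ε i * a i) • x i) := by
        simp only [hsign, map_sum]
    _ ≤ ‖f (∑ i ∈ s, (ε i * a i) • x i)‖ := Real.le_norm_self _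
    _ ≤ ‖∑ i ∈ s, (ε i * a i) • x i‖ := (f.le_of_opNorm_le hf _).trans_eq (one_mul _)
    _ = ‖∑ i ∈ s, a i • x i‖ := hu s a ε hε

theorem norm_sum_mul_smul_le (hu : OneUnconditional x) (s : Finset ℕ) {t : ℕ → ℝ}
    (ht : ∀ i, |t i| ≤ 1) (a : ℕ → ℝ) :
    ‖∑ i ∈ s, (t i * a i) • x i‖ ≤ ‖∑ i ∈ s, a i • x i‖ := by
  obtain ⟨f, hf, hfv⟩ := exists_dual_vector'' ℝ (∑ i ∈ s, (t i * a i) • x i)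
  calc ‖∑ i ∈ s, (t i * a i) • x i‖ = ∑ i ∈ s, t i * (a i * f (x i)) := by
        have hfv' : f (∑ i ∈ s, (t i * a i) • x i) = ‖∑ i ∈ s, (t i * a i) • x i‖ := by
          simpa using hfv
        rw [← hfv', map_sum]
        simp only [map_smul, smul_eq_mul, mul_assoc]
    _ ≤ ∑ i ∈ s, |a i| * |f (x i)| := sum_le_sum fun i _ => by
        calc t i * (a i * f (x i)) ≤ |t i| * (|a i| * |f (x i)|) := by
              rw [← abs_mul, ← abs_mul]; exact le_abs_self _
          _ ≤ |a i| * |f (x i)| := mul_le_of_le_one_left (by positivity) (ht i)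
    _ ≤ ‖∑ i ∈ s, a i • x i‖ := hu.sum_abs_mul_abs_le_norm hf s a

end OneUnconditional

structure SuccessiveIntervals (k m : ℕ → ℕ) : Prop where
  left_le_right : ∀ n, k n ≤ m n
  right_lt_next : ∀ n, m n < k (n + 1)

namespace SuccessiveIntervals

variable {k m : ℕ → ℕ}

theorem strictMono (h : SuccessiveIntervals k m) : StrictMono k :=
  strictMono_nat_of_lt_succ fun n => (h.left_le_right n).trans_lt (h.right_lt_next n)

theorem right_lt_left (h : SuccessiveIntervals k m) {n n' : ℕ} (hn : n < n') : m n < k n' :=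
  (h.right_lt_next n).trans_le (h.strictMono.monotone hn)

theorem eq_of_mem_Icc (h : SuccessiveIntervals k m) {i n n' : ℕ} (hn : i ∈ Icc (k n) (m n))
    (hn' : i ∈ Icc (k n') (m n')) : n = n' := by
  rw [mem_Icc] at hn hn'
  by_contra hne
  rcases lt_or_gt_of_ne hne with hlt | hlt
  · have := h.right_lt_left hlt; omega
  · have := h.right_lt_left hlt; omega

theorem pairwiseDisjoint (h : SuccessiveIntervals k m) (s : Set ℕ) :
    s.PairwiseDisjoint fun n => Icc (k n) (m n) :=
  fun _ _ _ _ hne => disjoint_left.2 fun _ hi hi' => hne (h.eq_of_mem_Icc hi hi')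

theorem of_le_right (h : SuccessiveIntervals k m) {w : ℕ → ℕ} (hkw : ∀ n, k n ≤ w n)
    (hwm : ∀ n, w n ≤ m n) : SuccessiveIntervals k w :=
  ⟨hkw, fun n => (hwm n).trans_lt (h.right_lt_next n)⟩

/-- Among intervals starting at or before `p`, only the one containing `p` can meet `[p, ∞)`. -/
theorem sum_eq_zero_or_eq_single {M : Type*} [AddCommMonoid M] (h : SuccessiveIntervals k m)
    {S : Finset ℕ} {p : ℕ} (hS : ∀ n ∈ S, k n ≤ p) (g : ℕ → M)
    (hg : ∀ n ∈ S, m n < p → g n = 0) :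
    ∑ n ∈ S, g n = 0 ∨ ∃ n ∈ S, p ≤ m n ∧ ∑ n ∈ S, g n = g n := by
  by_cases hp : ∃ n ∈ S, p ≤ m n
  · obtain ⟨n, hn, hpn⟩ := hp
    refine Or.inr ⟨n, hn, hpn, sum_eq_single_of_mem n hn fun n' hn' hne => hg n' hn' ?_⟩
    by_contra hpn'
    exact hne (h.eq_of_mem_Icc (mem_Icc.2 ⟨hS n' hn', not_lt.1 hpn'⟩) (mem_Icc.2 ⟨hS n hn, hpn⟩))
  · push Not at hp
    exact Or.inl (sum_eq_zero fun n hn => hg n hn (hp n hn))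

end SuccessiveIntervals

section jamesNorm

variable {x : ℕ → X} {a : ℕ → ℝ}

theorem jamesNorm_nonneg (x : ℕ → X) (a : ℕ → ℝ) : 0 ≤ jamesNorm x a :=
  Real.sSup_nonneg fun _ ⟨_, _, _, _, _, hv⟩ => hv ▸ norm_nonneg _

theorem bddAbove_jamesSet (hnorm : ∀ i, ‖x i‖ = 1) (ha : (support a).Finite) :
    BddAbove (jamesSet x a) := by
  refine ⟨∑ i ∈ ha.toFinset, |a i|, ?_⟩
  rintro _ ⟨r, k, m, hkm, hmk, rfl⟩
  set U := (range r).biUnion fun n => Icc (k n) (m n)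
  calc ‖∑ n ∈ range r, (∑ i ∈ Icc (k n) (m n), a i) • x (k n)‖
      ≤ ∑ n ∈ range r, ∑ i ∈ Icc (k n) (m n), |a i| := by
        refine (norm_sum_le _ _).trans (sum_le_sum fun n _ => ?_)
        rw [norm_smul, hnorm, mul_one, Real.norm_eq_abs]
        exact abs_sum_le_sum_abs _ _
    _ = ∑ i ∈ U with |a i| ≠ 0, |a i| := by
        rw [sum_filter_ne_zero, sum_biUnion (SuccessiveIntervals.pairwiseDisjoint ⟨hkm, hmk⟩ _)]
    _ ≤ ∑ i ∈ ha.toFinset, |a i| := by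
        refine sum_le_sum_of_subset_of_nonneg (fun i hi => ?_) fun _ _ _ => abs_nonneg _
        simpa using (mem_filter.1 hi).2

theorem abs_sum_Icc_le_jamesNorm (hnorm : ∀ i, ‖x i‖ = 1) (hbdd : BddAbove (jamesSet x a))
    {i j : ℕ} (hij : i ≤ j) : |∑ n ∈ Icc i j, a n| ≤ jamesNorm x a := by
  refine le_csSup hbdd ⟨1, fun n => i + (j + 1) * n, fun n => j + (j + 1) * n,
    fun n => show i + (j + 1) * n ≤ j + (j + 1) * n by omega,
    fun n => show j + (j + 1) * n < i + (j + 1) * (n + 1) by rw [mul_add_one]; omega, ?_⟩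
  simp [norm_smul, hnorm]

theorem abs_le_jamesNorm (hnorm : ∀ i, ‖x i‖ = 1) (hbdd : BddAbove (jamesSet x a)) (i : ℕ) :
    |a i| ≤ jamesNorm x a := by
  simpa using abs_sum_Icc_le_jamesNorm hnorm hbdd le_rfl (i := i)

theorem abs_finsum_le_jamesNorm (hnorm : ∀ i, ‖x i‖ = 1) (ha : (support a).Finite) :
    |∑ᶠ i, a i| ≤ jamesNorm x a := by
  obtain ⟨N, hN⟩ := ha.bddAbove
  rw [finsum_eq_sum_of_support_subset a (s := Icc 0 N) fun i hi => by simpa using hN hi]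
  exact abs_sum_Icc_le_jamesNorm hnorm (bddAbove_jamesSet hnorm ha) N.zero_le

theorem jamesNorm_const_mul (c : ℝ) (a : ℕ → ℝ) :
    jamesNorm x (fun i => c * a i) = |c| * jamesNorm x a := by
  have hscale : ∀ (r : ℕ) (k m : ℕ → ℕ),
      ‖∑ n ∈ range r, (∑ i ∈ Icc (k n) (m n), c * a i) • x (k n)‖
        = |c| * ‖∑ n ∈ range r, (∑ i ∈ Icc (k n) (m n), a i) • x (k n)‖ := fun r k m => by
    simp only [← mul_sum, ← smul_smul, ← smul_sum, norm_smul, Real.norm_eq_abs]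
  rw [jamesNorm, jamesNorm, ← smul_eq_mul, ← Real.sSup_smul_of_nonneg (abs_nonneg c)]
  congr 1
  ext v
  simp only [jamesSet, Set.mem_smul_set, Set.mem_ofPred_eq, smul_eq_mul, hscale]
  constructor
  · rintro ⟨r, k, m, hkm, hmk, rfl⟩
    exact ⟨_, ⟨r, k, m, hkm, hmk, rfl⟩, rfl⟩
  · rintro ⟨_, ⟨r, k, m, hkm, hmk, rfl⟩, rfl⟩
    exact ⟨r, k, m, hkm, hmk, rfl⟩

theorem SuccessiveIntervals.norm_sum_mul_le_jamesNorm {k m : ℕ → ℕ}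
    (h : SuccessiveIntervals k m) (hu : OneUnconditional x) (hbdd : BddAbove (jamesSet x a))
    {t : ℕ → ℝ} (ht : ∀ n, |t n| ≤ 1) (r : ℕ) :
    ‖∑ n ∈ range r, (t n * ∑ i ∈ Icc (k n) (m n), a i) • x (k n)‖ ≤ jamesNorm x a :=
  ((hu.comp_injective h.strictMono.injective).norm_sum_mul_smul_le _ ht _).trans
    (le_csSup hbdd ⟨r, k, m, h.left_le_right, h.right_lt_next, rfl⟩)

end jamesNorm

section jamesDualNorm

variable {x : ℕ → X} {l : ℕ → ℝ}

theorem jamesDualNorm_nonneg (x : ℕ → X) (l : ℕ → ℝ) : 0 ≤ jamesDualNorm x l :=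
  Real.sSup_nonneg fun _ ⟨_, _, _, hv⟩ => hv ▸ abs_nonneg _

theorem abs_finsum_mul_le_jamesDualNorm (hnorm : ∀ i, ‖x i‖ = 1) (hl : (support l).Finite)
    {a : ℕ → ℝ} (ha : (support a).Finite) (ha1 : jamesNorm x a ≤ 1) :
    |∑ᶠ i, l i * a i| ≤ jamesDualNorm x l := by
  refine le_csSup ⟨∑ i ∈ hl.toFinset, |l i|, ?_⟩ ⟨a, ha, ha1, rfl⟩
  rintro _ ⟨b, hb, hb1, rfl⟩
  rw [finsum_eq_sum_of_support_subset _ ((support_mul_subset_left _ _).trans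
    hl.coe_toFinset.superset)]
  refine (abs_sum_le_sum_abs _ _).trans (sum_le_sum fun i _ => ?_)
  rw [abs_mul]
  exact mul_le_of_le_one_right (abs_nonneg _)
    ((abs_le_jamesNorm hnorm (bddAbove_jamesSet hnorm hb) i).trans hb1)

theorem abs_finsum_mul_le_jamesDualNorm_mul (hnorm : ∀ i, ‖x i‖ = 1) (hl : (support l).Finite)
    {b : ℕ → ℝ} (hb : (support b).Finite) :
    |∑ᶠ i, l i * b i| ≤ jamesDualNorm x l * jamesNorm x b := by
  rcases (jamesNorm_nonneg x b).eq_or_lt with h0 | hpos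
  · have hb0 : ∀ i, b i = 0 := fun i =>
      abs_nonpos_iff.1 (h0 ▸ abs_le_jamesNorm hnorm (bddAbove_jamesSet hnorm hb) i)
    simp [hb0, ← h0]
  · set c := jamesNorm x b
    have hc : jamesNorm x (fun i => c⁻¹ * b i) = 1 := by
      rw [jamesNorm_const_mul, abs_inv, abs_of_pos hpos, inv_mul_cancel₀ hpos.ne']
    have hscaled := abs_finsum_mul_le_jamesDualNorm hnorm hl
      (hb.subset (support_mul_subset_right _ _)) hc.le
    have hsum : ∑ᶠ i, l i * (c⁻¹ * b i) = c⁻¹ * ∑ᶠ i, l i * b i := by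
      rw [mul_finsum]
      exact finsum_congr fun i => mul_left_comm _ _ _
    rwa [hsum, abs_mul, abs_inv, abs_of_pos hpos, inv_mul_le_iff₀ hpos, mul_comm] at hscaled

end jamesDualNorm

section blocks

variable (r : ℕ) (k m : ℕ → ℕ) (τ a : ℕ → ℝ)

def blockConst (i : ℕ) : ℝ :=
  ∑ n ∈ range r, if i ∈ Icc (k n) (m n) then τ n else 0

def headSum (p q : ℕ) : ℝ :=
  ∑ n ∈ range r with k n ≤ p, τ n * ∑ i ∈ Icc p (min q (m n)), a i

def tailSum (p q : ℕ) : ℝ :=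
  ∑ n ∈ range r with p < k n, τ n * ∑ i ∈ Icc (k n) (min q (m n)), a i

theorem finsum_blockConst_mul :
    ∑ᶠ i, blockConst r k m τ i * a i = ∑ n ∈ range r, τ n * ∑ i ∈ Icc (k n) (m n), a i := by
  simp only [blockConst, sum_mul, ite_mul, zero_mul]
  have hsupp : ∀ n, (support fun i => if i ∈ Icc (k n) (m n) then τ n * a i else 0)
      ⊆ Icc (k n) (m n) := fun n i hi => by
    by_contra h
    exact hi (if_neg h)
  rw [finsum_sum_comm _ _ fun n _ => (finite_toSet _).subset (hsupp n)]
  refine sum_congr rfl fun n _ => ?_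
  rw [finsum_eq_sum_of_support_subset _ (hsupp n), mul_sum]
  exact sum_congr rfl fun i hi => if_pos hi

theorem sum_Icc_blockConst_mul (p q : ℕ) :
    ∑ i ∈ Icc p q, blockConst r k m τ i * a i = headSum r k m τ a p q + tailSum r k m τ a p q := by
  have hinter : ∀ n, Icc p q ∩ Icc (k n) (m n) = Icc (max p (k n)) (min q (m n)) := fun n => by
    ext i
    simp only [mem_inter, mem_Icc]
    omega
  calc ∑ i ∈ Icc p q, blockConst r k m τ i * a i
      = ∑ n ∈ range r, τ n * ∑ i ∈ Icc (max p (k n)) (min q (m n)), a i := by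
        simp only [blockConst, sum_mul, ite_mul, zero_mul]
        rw [sum_comm]
        refine sum_congr rfl fun n _ => ?_
        rw [sum_ite_mem, hinter, mul_sum]
    _ = _ := by
        rw [headSum, tailSum, ← sum_filter_add_sum_filter_not (range r) (fun n => k n ≤ p)]
        simp only [not_le]
        congr 1 <;> refine sum_congr rfl fun n hn => ?_ <;> rw [mem_filter] at hn
        · rw [max_eq_left hn.2]
        · rw [max_eq_right hn.2.le]

end blocks

section multiplier

variable {x : ℕ → X} {k m p q : ℕ → ℕ} {a : ℕ → ℝ}

theorem norm_sum_headSum_smul_le (hu : OneUnconditional x) (hbdd : BddAbove (jamesSet x a))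
    (hkm : SuccessiveIntervals k m) (hpq : SuccessiveIntervals p q) {τ : ℕ → ℝ}
    (hτ : ∀ n, |τ n| ≤ 1) (r s : ℕ) :
    ‖∑ j ∈ range s, headSum r k m τ a (p j) (q j) • x (p j)‖ ≤ jamesNorm x a := by
  have hhead : ∀ j, ∃ σ u, |σ| ≤ 1 ∧ p j ≤ u ∧ u ≤ q j ∧
      headSum r k m τ a (p j) (q j) = σ * ∑ i ∈ Icc (p j) u, a i := fun j => by
    rcases hkm.sum_eq_zero_or_eq_single (S := {n ∈ range r | k n ≤ p j})
      (fun n hn => (mem_filter.1 hn).2) (fun n => τ n * ∑ i ∈ Icc (p j) (min (q j) (m n)), a i)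
      (fun n _ hmp => by rw [Icc_eq_empty (by omega), sum_empty, mul_zero])
      with h0 | ⟨n, -, hpm, heq⟩
    · exact ⟨0, p j, by simp, le_rfl, hpq.left_le_right j, by rw [headSum, h0, zero_mul]⟩
    · exact ⟨τ n, min (q j) (m n), hτ n, le_min (hpq.left_le_right j) hpm, min_le_left _ _, heq⟩
  choose σ u hσ hpu huq hσu using hhead
  simp only [hσu]
  exact (hpq.of_le_right hpu huq).norm_sum_mul_le_jamesNorm hu hbdd hσ s

theorem norm_sum_tailSum_smul_le (hnorm : ∀ i, ‖x i‖ = 1) (hu : OneUnconditional x)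
    (hbdd : BddAbove (jamesSet x a)) (hkm : SuccessiveIntervals k m)
    (hpq : SuccessiveIntervals p q) {f : X →L[ℝ] ℝ} (hf : ‖f‖ ≤ 1) (r s : ℕ) :
    ‖∑ j ∈ range s, tailSum r k m (fun n => f (x (k n))) a (p j) (q j) • x (p j)‖
      ≤ jamesNorm x a := by
  set A : ℕ → ℕ → ℝ := fun j n => |∑ i ∈ Icc (k n) (min (q j) (m n)), a i|
  have htail : ∀ n, ∃ σ w, |σ| ≤ 1 ∧ k n ≤ w ∧ w ≤ m n ∧
      ∑ j ∈ range s with p j < k n, A j n ≤ |σ * ∑ i ∈ Icc (k n) w, a i| := fun n => by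
    rcases hpq.sum_eq_zero_or_eq_single (S := {j ∈ range s | p j < k n})
      (fun j hj => (mem_filter.1 hj).2.le) (A · n)
      (fun j _ hqk => by simp only [A]; rw [Icc_eq_empty (by omega), sum_empty, abs_zero])
      with h0 | ⟨j, -, hkq, heq⟩
    · exact ⟨0, k n, by simp, le_rfl, hkm.left_le_right n, by simp [h0]⟩
    · exact ⟨1, min (q j) (m n), by simp, le_min hkq (hkm.left_le_right n), min_le_right _ _,
        by rw [heq, one_mul]⟩
  choose σ w hσ hkw hwm hσw using htail
  calc ‖∑ j ∈ range s, tailSum r k m (fun n => f (x (k n))) a (p j) (q j) • x (p j)‖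
      ≤ ∑ j ∈ range s, ∑ n ∈ range r with p j < k n, |f (x (k n))| * A j n := by
        refine (norm_sum_le _ _).trans (sum_le_sum fun j _ => ?_)
        rw [norm_smul, hnorm, mul_one, Real.norm_eq_abs]
        exact (abs_sum_le_sum_abs _ _).trans_eq (sum_congr rfl fun n _ => abs_mul _ _)
    _ = ∑ n ∈ range r, |f (x (k n))| * ∑ j ∈ range s with p j < k n, A j n := by
        simp only [mul_sum]
        exact sum_comm' fun j n => by simp only [mem_filter, mem_range]; tauto
    _ ≤ ∑ n ∈ range r, |σ n * ∑ i ∈ Icc (k n) (w n), a i| * |f (x (k n))| :=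
        sum_le_sum fun n _ => (mul_le_mul_of_nonneg_left (hσw n) (abs_nonneg _)).trans_eq
          (mul_comm _ _)
    _ ≤ ‖∑ n ∈ range r, (σ n * ∑ i ∈ Icc (k n) (w n), a i) • x (k n)‖ :=
        (hu.comp_injective hkm.strictMono.injective).sum_abs_mul_abs_le_norm hf _ _
    _ ≤ jamesNorm x a := (hkm.of_le_right hkw hwm).norm_sum_mul_le_jamesNorm hu hbdd hσ r

theorem jamesNorm_blockConst_mul_le (hnorm : ∀ i, ‖x i‖ = 1) (hu : OneUnconditional x)
    (ha : (support a).Finite) (hkm : SuccessiveIntervals k m) {f : X →L[ℝ] ℝ} (hf : ‖f‖ ≤ 1)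
    (r : ℕ) :
    jamesNorm x (fun i => blockConst r k m (fun n => f (x (k n))) i * a i)
      ≤ 2 * jamesNorm x a := by
  have hbdd := bddAbove_jamesSet hnorm ha
  have hτ : ∀ n, |f (x (k n))| ≤ 1 := fun n => by
    simpa [hnorm] using (f.le_of_opNorm_le hf (x (k n)))
  refine Real.sSup_le ?_ (mul_nonneg zero_le_two (jamesNorm_nonneg x a))
  rintro _ ⟨s, p, q, hpq, hqp, rfl⟩
  simp only [sum_Icc_blockConst_mul, add_smul, sum_add_distrib, two_mul]
  exact (norm_add_le _ _).trans (add_le_add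
    (norm_sum_headSum_smul_le hu hbdd hkm ⟨hpq, hqp⟩ hτ r s)
    (norm_sum_tailSum_smul_le hnorm hu hbdd hkm ⟨hpq, hqp⟩ hf r s))

end multiplier

theorem jamesNorm_mul_le {x : ℕ → X} (hnorm : ∀ i, ‖x i‖ = 1) (hu : OneUnconditional x)
    {l a : ℕ → ℝ} (hl : (support l).Finite) (ha : (support a).Finite) :
    jamesNorm x (fun i => l i * a i) ≤ 2 * jamesDualNorm x l * jamesNorm x a := by
  have hJ := jamesDualNorm_nonneg x l
  refine Real.sSup_le ?_ (by have := jamesNorm_nonneg x a; positivity)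
  rintro _ ⟨r, k, m, hkm, hmk, rfl⟩
  set V := ∑ n ∈ range r, (∑ i ∈ Icc (k n) (m n), l i * a i) • x (k n)
  obtain ⟨f, hf, hfV⟩ := exists_dual_vector'' ℝ V
  set b := fun i => blockConst r k m (fun n => f (x (k n))) i * a i
  have hVb : ‖V‖ = ∑ᶠ i, l i * b i := by
    have hfV' : f V = ‖V‖ := by simpa using hfV
    rw [← hfV', map_sum]
    simp only [map_smul, smul_eq_mul, mul_comm _ (f _), b, mul_left_comm (l _),
      finsum_blockConst_mul]
  calc ‖V‖ ≤ |∑ᶠ i, l i * b i| := hVb.trans_le (le_abs_self _)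
    _ ≤ jamesDualNorm x l * jamesNorm x b :=
        abs_finsum_mul_le_jamesDualNorm_mul hnorm hl (ha.subset (support_mul_subset_right _ _))
    _ ≤ jamesDualNorm x l * (2 * jamesNorm x a) :=
        mul_le_mul_of_nonneg_left (jamesNorm_blockConst_mul_le hnorm hu ha ⟨hkm, hmk⟩ hf r) hJ
    _ = 2 * jamesDualNorm x l * jamesNorm x a := by ring

/-- **Theorem.** For a normalized 1-unconditional sequence, the operator norm of the
diagonal multiplier with entries `λ` on the jamesification is equivalent to the dual
jamesification norm of `λ`, with product of constants at most 2. -/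
theorem multiplier_norm_equiv_jamesDualNorm
    (X : Type) [NormedAddCommGroup X] [NormedSpace ℝ X]
    (x : ℕ → X) (hnorm : ∀ i, ‖x i‖ = 1) (hu : OneUnconditional x) :
    ∃ c₁ c₂ : ℝ, 0 < c₁ ∧ 0 < c₂ ∧ c₁ * c₂ ≤ 2 ∧
      ∀ l : ℕ → ℝ, (Function.support l).Finite →
        jamesDualNorm x l ≤ c₁ * sSup (multiplierSet x l) ∧
        sSup (multiplierSet x l) ≤ c₂ * jamesDualNorm x l := by
  refine ⟨1, 2, one_pos, two_pos, by norm_num, fun l hl => ?_⟩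
  have hJ := jamesDualNorm_nonneg x l
  have hmul : ∀ v ∈ multiplierSet x l, v ≤ 2 * jamesDualNorm x l := by
    rintro _ ⟨a, ha, ha1, rfl⟩
    exact (jamesNorm_mul_le hnorm hu hl ha).trans
      (mul_le_of_le_one_right (by positivity) ha1)
  refine ⟨?_, Real.sSup_le hmul (by positivity)⟩
  rw [one_mul]
  refine Real.sSup_le ?_ (Real.sSup_nonneg fun _ ⟨_, _, _, hv⟩ => hv ▸ jamesNorm_nonneg x _)
  rintro _ ⟨a, ha, ha1, rfl⟩
  exact (abs_finsum_le_jamesNorm hnorm (ha.subset (support_mul_subset_right _ _))).trans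
    (le_csSup ⟨_, hmul⟩ ⟨a, ha, ha1, rfl⟩)
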